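/- arXiv:1910.03649 — 4 statements merged into one kernel-verified Lean document; each statement's English description precedes it below -/
import Mathlib

section
/- For n variables x_1, ..., x_n, the symmetrized expression ∑_{w ∈ S_n} w · ( x_1^{n-1} x_2^{n-2} ⋯ x_{n-1} / ∏_{1 ≤ i < j ≤ n} (x_i - x_j) ) equals 1, i.e., the classical Schur polynomial corresponding to the empty partition is 1. -/
/-!
The matrix `projVandermonde 1 v` has entries `v a ^ (n - 1 - b)` and determinant
`Δ(v) = ∏_{i<j} (v i - v j)`. Permuting its rows by `w` shows `Δ(v ∘ w) = sign w • Δ(v)`,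
so the symmetrized sum is `(∑_w sign w • ∏_i v (w i) ^ (n - 1 - i)) / Δ(v)`, whose numerator is
the Leibniz expansion of the same determinant; it is nonzero because the variables are distinct.
-/

open Finset Matrix Equiv Function

variable {R K : Type*} [CommRing R] [Field K] {n : ℕ}

lemma Fin.prod_filter_lt_eq_prod_prod_Ioi {M : Type*} [CommMonoid M] (f : Fin n → Fin n → M) :
    ∏ p ∈ univ.filter (fun p : Fin n × Fin n => p.1 < p.2), f p.1 p.2 =
      ∏ i, ∏ j ∈ Ioi i, f i j := by
  rw [← univ_product_univ, prod_filter, prod_product]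
  refine prod_congr rfl fun i _ => ?_
  rw [← prod_filter]
  congr 1
  ext j
  simp

namespace Matrix

lemma projVandermonde_one_apply (v : Fin n → R) (i j : Fin n) :
    projVandermonde 1 v i j = v i ^ (n - 1 - j) := by
  rw [projVandermonde_apply, Pi.one_apply, one_pow, one_mul, Fin.val_rev]
  congr 1
  omega

lemma det_projVandermonde_one (v : Fin n → R) :
    det (projVandermonde 1 v) =
      ∏ p ∈ univ.filter (fun p : Fin n × Fin n => p.1 < p.2), (v p.1 - v p.2) := by
  rw [det_projVandermonde, Fin.prod_filter_lt_eq_prod_prod_Ioi fun i j => v i - v j]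
  simp only [Pi.one_apply, one_mul]

lemma det_projVandermonde_one_comp_perm (v : Fin n → R) (w : Perm (Fin n)) :
    det (projVandermonde 1 (v ∘ w)) = Perm.sign w * det (projVandermonde 1 v) :=
  det_permute w (projVandermonde 1 v)

lemma det_projVandermonde_one_ne_zero [IsDomain R] {v : Fin n → R} (hv : Injective v) :
    det (projVandermonde 1 v) ≠ 0 := by
  rw [det_projVandermonde_one, prod_ne_zero_iff]
  intro p hp
  exact sub_ne_zero.2 (hv.ne (mem_filter.1 hp).2.ne)

end Matrix

lemma div_units_int_mul {D : Type*} [DivisionRing D] (s : ℤˣ) (a b : D) :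
    a / ((s : D) * b) = s * a / b := by
  rcases Int.units_eq_one_or s with rfl | rfl <;> simp [neg_div, div_neg]

theorem sum_perm_prod_pow_div_prod_sub_eq_one {v : Fin n → K} (hv : Injective v) :
    ∑ w : Perm (Fin n),
        (∏ i : Fin n, v (w i) ^ (n - 1 - (i : ℕ))) /
          ∏ p ∈ univ.filter (fun p : Fin n × Fin n => p.1 < p.2), (v (w p.1) - v (w p.2))
      = 1 := by
  set M := projVandermonde 1 v
  have hdenom (w : Perm (Fin n)) :
      ∏ p ∈ univ.filter (fun p : Fin n × Fin n => p.1 < p.2), (v (w p.1) - v (w p.2)) =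
        Perm.sign w * det M := by
    rw [← det_projVandermonde_one_comp_perm, det_projVandermonde_one]
    rfl
  have hnum (w : Perm (Fin n)) : ∏ i : Fin n, v (w i) ^ (n - 1 - (i : ℕ)) = ∏ i, M (w i) i := by
    simp only [M, projVandermonde_one_apply]
  calc _ = ∑ w : Perm (Fin n), (Perm.sign w : K) * (∏ i, M (w i) i) / det M := by
        refine sum_congr rfl fun w _ => ?_
        rw [hdenom, hnum, div_units_int_mul]
    _ = det M / det M := by rw [← sum_div, det_apply']
    _ = 1 := div_self (det_projVandermonde_one_ne_zero hv)

open MvPolynomial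

/-- In the rational function field `ℚ(x₁,…,xₙ)`, the symmetrization
`∑_{w ∈ Sₙ} w · ( x^{ρ_{n-1}} / ∏_{i<j} (xᵢ - xⱼ) ) = 1`,
i.e. the Schur polynomial of the empty partition is `1`. -/
theorem stmt4 (n : ℕ) :
    letI K := FractionRing (MvPolynomial (Fin n) ℚ)
    letI x : Fin n → K := fun i => algebraMap (MvPolynomial (Fin n) ℚ) K (X i)
    ∑ w : Equiv.Perm (Fin n),
        (∏ i : Fin n, x (w i) ^ (n - 1 - (i : ℕ))) /
          ∏ p ∈ Finset.univ.filter (fun p : Fin n × Fin n => p.1 < p.2),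
            (x (w p.1) - x (w p.2))
      = 1 := by
  beta_reduce
  exact sum_perm_prod_pow_div_prod_sub_eq_one (K := FractionRing (MvPolynomial (Fin n) ℚ))
    (v := fun i => algebraMap _ _ (X i))
    ((IsFractionRing.injective (MvPolynomial (Fin n) ℚ) _).comp X_injective)
end

section
/- Define the K-theoretic Segre series of n variables x_1, ..., x_n by G(u) := (1/(1 - βu^{-1})) ∏_{j=1}^{n} (1 - βx_j)/(1 - x_j u), a formal Laurent series ∑_{m ∈ ℤ} G_m u^m with coefficients G_m ∈ ℤ[β][x_1,...,x_n], where 1/(1 - βu^{-1}) is expanded as ∑_{k≥0} β^k u^{-k}. Then for every integer a ≥ 0, one has G_{-a} = β^a. -/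
/-!
With `c = ∏ⱼ (1 - βxⱼ)`, the terms of `G_{-a}` with `k < a` vanish and the others give
`G_{-a} = β^a ∑_{l ≥ 0} β^l c h_l`. Since `∑_l β^l h_l = ∏ⱼ (1 - βxⱼ)⁻¹` is the power series with
coefficient `β^{|e|}` at `x^e`, the sum is `c · c⁻¹ = 1`. The identity `c · ∑_e β^{|e|} x^e = 1` is
proved one variable at a time: multiplying by `1 - βxⱼ` removes exactly the monomials involving `xⱼ`.
-/

noncomputable section

open MvPolynomial

/-- The coefficient ring `ℤ[β]`. -/
abbrev Rβ : Type := Polynomial ℤ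
abbrev β : Rβ := Polynomial.X

/-- Complete homogeneous symmetric polynomial `h_d(x₁,…,xₙ)` over `ℤ[β]`:
the coefficient of `u^d` in `∏ⱼ 1/(1 - xⱼu) = ∏ⱼ ∑ₖ xⱼ^k u^k`. -/
def hh (n d : ℕ) : MvPolynomial (Fin n) Rβ := hsymm (Fin n) Rβ d

/-- `∏ⱼ (1 - βxⱼ)`. -/
def cβ (n : ℕ) : MvPolynomial (Fin n) Rβ :=
  ∏ j : Fin n, (1 - MvPolynomial.C β * MvPolynomial.X j)

/-- `b_l`: the coefficient of `u^l` in `∏ⱼ (1-βxⱼ)/(1-xⱼu)`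
(expanding `1/(1-xⱼu) = ∑ₖ xⱼ^k u^k`); zero for `l < 0`. -/
def bβ (n : ℕ) (l : ℤ) : MvPolynomial (Fin n) Rβ :=
  if l < 0 then 0 else cβ n * hh n l.toNat

/-- `G_m`: the coefficient of `u^m` in the Laurent series
`G(u) = (1/(1-βu⁻¹)) ∏ⱼ (1-βxⱼ)/(1-xⱼu)`, where `1/(1-βu⁻¹) = ∑ₖ β^k u^{-k}`;
thus `G_m = ∑_{k≥0} β^k b_{m+k}`, a well-defined formal power series in `x`
(for each monomial `x^d` only the finitely many `k ≤ |d| + |m|` contribute,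
since `b_{m+k}` has all terms of total degree `≥ m+k`). -/
def Gcoeff (n : ℕ) (m : ℤ) : MvPowerSeries (Fin n) Rβ :=
  fun d => ∑ k ∈ Finset.range (d.sum (fun _ e => e) + m.natAbs + 1),
    β ^ k * MvPolynomial.coeff d (bβ n (m + k))

open Finset

namespace MvPolynomial

variable {σ R : Type*} [CommSemiring R]

theorem prod_map_X_eq_monomial [DecidableEq σ] (s : Multiset σ) :
    (s.map (X : σ → MvPolynomial σ R)).prod = monomial (Multiset.toFinsupp s) 1 := by
  induction s using Multiset.induction_on with
  | empty => simp
  | cons a s ih =>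
    rw [Multiset.map_cons, Multiset.prod_cons, ih, ← Multiset.singleton_add,
      Multiset.toFinsupp_add, Multiset.toFinsupp_singleton, X, monomial_mul, one_mul]

theorem coeff_hsymm [Fintype σ] [DecidableEq σ] (n : ℕ) (d : σ →₀ ℕ) :
    coeff d (hsymm σ R n) = if d.degree = n then 1 else 0 := by
  simp only [hsymm, coeff_sum, prod_map_X_eq_monomial, coeff_monomial]
  split_ifs with hd
  · have hcard : Multiset.card (Finsupp.toMultiset d) = n := by
      rw [Finsupp.card_toMultiset]; exact hd
    rw [Fintype.sum_eq_single ⟨_, hcard⟩ fun s hs => if_neg fun h => hs (Sym.ext ?_)]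
    · simp
    · exact Multiset.toFinsupp_eq_iff.mp h
  · refine Fintype.sum_eq_zero _ fun s => if_neg fun h => hd ?_
    subst h
    exact (Multiset.toFinsupp_sum_eq _).trans s.2

end MvPolynomial

namespace MvPowerSeries

variable {σ R : Type*} [CommRing R]

/-- The expansion of `∏_{j ∉ T} (1 - b X_j)⁻¹`. -/
noncomputable def geometricOff (b : R) (T : Finset σ) : MvPowerSeries σ R :=
  fun e => if ∀ i ∈ T, e i = 0 then b ^ e.degree else 0

theorem coeff_geometricOff (b : R) (T : Finset σ) (e : σ →₀ ℕ) :
    coeff e (geometricOff b T) = if ∀ i ∈ T, e i = 0 then b ^ e.degree else 0 :=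
  rfl

theorem coeff_one_sub_C_mul_X_mul (b : R) (j : σ) (f : MvPowerSeries σ R) (e : σ →₀ ℕ) :
    coeff e ((1 - C b * X j) * f) =
      coeff e f - if Finsupp.single j 1 ≤ e then b * coeff (e - Finsupp.single j 1) f else 0 := by
  rw [sub_mul, one_mul, map_sub, mul_assoc, coeff_C_mul, X_def, coeff_monomial_mul, mul_ite,
    one_mul, mul_zero]

theorem one_sub_C_mul_X_mul_geometricOff [DecidableEq σ] (b : R) {T : Finset σ} {j : σ}
    (hj : j ∉ T) : (1 - C b * X j) * geometricOff b T = geometricOff b (insert j T) := by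
  ext e
  rw [coeff_one_sub_C_mul_X_mul]
  simp only [coeff_geometricOff, forall_mem_insert]
  by_cases hje : Finsupp.single j 1 ≤ e
  · have hT : (∀ i ∈ T, (e - Finsupp.single j 1 : σ →₀ ℕ) i = 0) ↔ ∀ i ∈ T, e i = 0 :=
      forall₂_congr fun i hi => by simp [show j ≠ i by rintro rfl; exact hj hi]
    have hdeg : e.degree = (e - Finsupp.single j 1).degree + 1 := by
      conv_lhs => rw [← tsub_add_cancel_of_le hje]
      rw [map_add, Finsupp.degree_single]
    have hej : e j ≠ 0 := Nat.one_le_iff_ne_zero.mp (Finsupp.single_le_iff.mp hje)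
    simp only [if_pos hje, hT, hej, false_and, if_false, hdeg, pow_succ]
    split_ifs <;> ring
  · have hej : e j = 0 := by simpa [Finsupp.single_le_iff] using hje
    simp [hje, hej]

theorem prod_one_sub_C_mul_X_mul_geometricOff_empty [DecidableEq σ] (b : R) (T : Finset σ) :
    (∏ j ∈ T, (1 - C b * X j)) * geometricOff b ∅ = geometricOff b T := by
  induction T using Finset.induction_on with
  | empty => rw [prod_empty, one_mul]
  | insert j T hj ih => rw [prod_insert hj, mul_assoc, ih, one_sub_C_mul_X_mul_geometricOff b hj]

theorem geometricOff_univ [Fintype σ] (b : R) : geometricOff b (univ : Finset σ) = 1 := by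
  classical
  ext e
  have he : (∀ i ∈ univ, e i = 0) ↔ e = 0 := by simp [Finsupp.ext_iff]
  rw [coeff_geometricOff, coeff_one]
  simp only [he]
  split_ifs with h0 <;> simp [h0]

end MvPowerSeries

namespace MvPolynomial

variable {σ R : Type*} [CommRing R]

theorem coe_prod_one_sub_C_mul_X (b : R) (T : Finset σ) :
    ((∏ j ∈ T, (1 - C b * X j) : MvPolynomial σ R) : MvPowerSeries σ R) =
      ∏ j ∈ T, (1 - MvPowerSeries.C b * MvPowerSeries.X j) := by
  rw [← coeToMvPowerSeries.ringHom_apply, map_prod]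
  simp only [map_sub, map_one, map_mul, coeToMvPowerSeries.ringHom_apply, coe_C, coe_X]

theorem sum_antidiagonal_coeff_prod_one_sub_C_mul_X_mul_pow_degree [Fintype σ] [DecidableEq σ]
    (b : R) (d : σ →₀ ℕ) :
    ∑ p ∈ antidiagonal d, coeff p.1 (∏ j, (1 - C b * X j)) * b ^ p.2.degree =
      if d = 0 then 1 else 0 := by
  have h := congrArg (MvPowerSeries.coeff d)
    (MvPowerSeries.prod_one_sub_C_mul_X_mul_geometricOff_empty b (univ : Finset σ))
  rw [MvPowerSeries.geometricOff_univ, MvPowerSeries.coeff_mul, MvPowerSeries.coeff_one] at h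
  rw [← h]
  refine sum_congr rfl fun p _ => ?_
  rw [MvPowerSeries.coeff_geometricOff, if_pos fun _ h => absurd h (notMem_empty _),
    ← coeff_coe, coe_prod_one_sub_C_mul_X]

theorem sum_range_pow_mul_coeff_prod_mul_hsymm [Fintype σ] [DecidableEq σ] (b : R)
    {d : σ →₀ ℕ} {D : ℕ} (hD : d.degree ≤ D) :
    ∑ l ∈ range (D + 1), b ^ l * coeff d ((∏ j, (1 - C b * X j)) * hsymm σ R l) =
      if d = 0 then 1 else 0 := by
  simp_rw [coeff_mul, coeff_hsymm, mul_sum, mul_ite, mul_one, mul_zero]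
  rw [sum_comm, ← sum_antidiagonal_coeff_prod_one_sub_C_mul_X_mul_pow_degree b d]
  refine sum_congr rfl fun p hp => ?_
  have hp2 : p.2.degree < D + 1 := by
    have := congrArg Finsupp.degree (mem_antidiagonal.mp hp)
    rw [map_add] at this
    omega
  rw [sum_ite_eq (range (D + 1)), if_pos (mem_range.mpr hp2), mul_comm]

end MvPolynomial

theorem bβ_natCast (n l : ℕ) : bβ n l = cβ n * hh n l := by
  rw [bβ, if_neg (Int.natCast_nonneg l).not_gt, Int.toNat_natCast]

theorem bβ_of_neg (n : ℕ) {l : ℤ} (hl : l < 0) : bβ n l = 0 :=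
  if_pos hl

theorem coeff_Gcoeff_neg_natCast (n a : ℕ) (d : Fin n →₀ ℕ) :
    MvPowerSeries.coeff d (Gcoeff n (-(a : ℤ))) =
      β ^ a * ∑ l ∈ range (d.degree + 1), β ^ l * coeff d (cβ n * hh n l) := by
  change ∑ k ∈ range (d.degree + (-(a : ℤ)).natAbs + 1), _ = _
  rw [Int.natAbs_neg, Int.natAbs_natCast, add_right_comm, add_comm, sum_range_add, mul_sum]
  have hlow : ∀ k ∈ range a, β ^ k * coeff d (bβ n (-(a : ℤ) + k)) = 0 := fun k hk => by
    rw [bβ_of_neg n (by have := mem_range.mp hk; omega), coeff_zero, mul_zero]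
  rw [sum_eq_zero hlow, zero_add]
  refine sum_congr rfl fun l _ => ?_
  rw [show -(a : ℤ) + (a + l : ℕ) = l by push_cast; ring, bβ_natCast, pow_add, mul_assoc]

/-- K-theoretic Segre classes in nonpositive degrees: `G_{-a} = β^a` for all `a ≥ 0`. -/
theorem stmt13 (n a : ℕ) :
    Gcoeff n (-(a : ℤ)) = (MvPowerSeries.C (β ^ a) : MvPowerSeries (Fin n) Rβ) := by
  ext d : 1
  simp only [coeff_Gcoeff_neg_natCast, MvPowerSeries.coeff_C, cβ, hh]
  rw [MvPolynomial.sum_range_pow_mul_coeff_prod_mul_hsymm β le_rfl, mul_ite, mul_one, mul_zero]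
end
end

section
/- With the K-theoretic Segre series G(u) = (1/(1 - βu^{-1})) ∏_{j=1}^{n} (1 - βx_j)/(1 - x_j u) = ∑_{m∈ℤ} G_m u^m as above, for every integer a ≥ 1 the coefficient G_a equals ∑_{k=0}^{n-1} β^k ( ∑_{i=0}^{k} (-1)^i e_i(x) h_{a+k-i}(x) ), where e_i and h_j are the elementary and complete homogeneous symmetric polynomials in x_1, ..., x_n. -/
noncomputable section

open MvPolynomial Finset

variable {σ : Type*} [Fintype σ] [DecidableEq σ] {R : Type*} [CommRing R]

lemma univ_sum_toFinsupp (m : Multiset σ) :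
    (univ : Finset σ).sum ⇑(Multiset.toFinsupp m) = Multiset.card m := by
  rw [← Multiset.toFinsupp_sum_eq m, Finsupp.sum_fintype _ _ fun _ => rfl]
  rfl

lemma hsymm_eq_sum (d : ℕ) :
    hsymm σ R d = ∑ l ∈ finsuppAntidiag (univ : Finset σ) d,
      ∏ i, (X i : MvPolynomial σ R) ^ l i := by
  rw [hsymm]
  refine Finset.sum_bij' (fun s _ => Multiset.toFinsupp (s : Sym σ d).1)
    (fun l hl => (⟨Multiset.toFinsupp.symm l, ?_⟩ : Sym σ d)) ?_ ?_ ?_ ?_ ?_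
  · rcases Finset.mem_finsuppAntidiag.mp hl with ⟨h1, -⟩
    rw [← univ_sum_toFinsupp (Multiset.toFinsupp.symm l)]
    simpa using h1
  · intro s _
    rw [Finset.mem_finsuppAntidiag]
    exact ⟨by rw [univ_sum_toFinsupp]; exact s.2, fun i _ => Finset.mem_univ i⟩
  · intro l hl; exact Finset.mem_univ _
  · intro s _; exact Subtype.ext (by simp)
  · intro l hl; simp
  · intro s _
    rw [Finset.prod_multiset_map_count]
    refine Finset.prod_subset (Finset.subset_univ _) fun i _ hi => ?_
    rw [Multiset.count_eq_zero_of_notMem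
      (by simpa using hi), pow_zero]

lemma hsymm_gen :
    PowerSeries.mk (fun d => hsymm σ R d)
      = ∏ i : σ, PowerSeries.mk (fun k => (X i : MvPolynomial σ R) ^ k) := by
  ext d
  rw [PowerSeries.coeff_mk, PowerSeries.coeff_prod, hsymm_eq_sum]
  simp [PowerSeries.coeff_mk]

lemma geom_inv (A : Type*) [CommRing A] (x : A) :
    (1 - PowerSeries.C x * PowerSeries.X) * PowerSeries.mk (fun k => x ^ k) = 1 := by
  ext d
  rw [sub_mul, one_mul, map_sub, mul_assoc]
  cases d with
  | zero => simp
  | succ d =>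
    rw [PowerSeries.coeff_C_mul, PowerSeries.coeff_succ_X_mul]
    simp [pow_succ, mul_comm]

lemma prod_one_sub {ι : Type*} [DecidableEq ι] {A : Type*} [CommRing A] (s : Finset ι)
    (r : A) (f : ι → A) :
    ∏ i ∈ s, (1 - r * f i)
      = ∑ k ∈ range (s.card + 1), (-r) ^ k * ∑ t ∈ powersetCard k s, ∏ i ∈ t, f i := by
  have h : ∀ i ∈ s, 1 - r * f i = (-r) * f i + 1 := by intros; ring
  rw [Finset.prod_congr rfl h, Finset.prod_add]
  rw [powerset_card_disjiUnion]; erw [Finset.sum_disjiUnion]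
  refine Finset.sum_congr rfl fun k _ => ?_
  rw [Finset.mul_sum]
  refine Finset.sum_congr rfl fun t ht => ?_
  rw [Finset.prod_const_one, mul_one, Finset.prod_mul_distrib, Finset.prod_const,
    (Finset.mem_powersetCard.mp ht).2]

lemma esymm_zero_of_gt (k : ℕ) (h : Fintype.card σ < k) : esymm σ R k = 0 := by
  rw [esymm, Finset.powersetCard_eq_empty.2 (by simpa using h), Finset.sum_empty]

lemma prod_expand :
    (∏ i : σ, (1 - PowerSeries.C (X i) * PowerSeries.X))
      = ∑ k ∈ range (Fintype.card σ + 1),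
          (-(PowerSeries.X (R := MvPolynomial σ R))) ^ k
            * PowerSeries.C (esymm σ R k) := by
  rw [Finset.prod_congr rfl (fun i _ => show _ = 1 - PowerSeries.X *
      PowerSeries.C (R := MvPolynomial σ R) (X i) by ring),
    prod_one_sub, Finset.card_univ]
  refine Finset.sum_congr rfl fun k _ => ?_
  rw [esymm, map_sum]
  exact congrArg _ (Finset.sum_congr rfl fun t _ => (map_prod _ _ _).symm)

lemma prod_mul_hsymm :
    (∏ i : σ, (1 - PowerSeries.C (X i) * PowerSeries.X))
      * PowerSeries.mk (fun d => hsymm σ R d) = 1 := by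
  rw [hsymm_gen, ← Finset.prod_mul_distrib]
  exact Finset.prod_eq_one fun i _ => geom_inv _ _

lemma key (m : ℕ) (hm : 1 ≤ m) :
    ∑ i ∈ range (m + 1),
      (-1 : MvPolynomial σ R) ^ i * esymm σ R i * hsymm σ R (m - i) = 0 := by
  have h1 := prod_mul_hsymm (σ := σ) (R := R)
  rw [prod_expand, Finset.sum_mul] at h1
  have h2 := congrArg (PowerSeries.coeff m) h1
  rw [PowerSeries.coeff_one, if_neg (by omega), map_sum] at h2
  set N := Fintype.card σ with hN
  have hterm : ∀ k, PowerSeries.coeff m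
      ((-(PowerSeries.X (R := MvPolynomial σ R))) ^ k * PowerSeries.C (esymm σ R k)
        * PowerSeries.mk (fun d => hsymm σ R d))
      = if k ≤ m then (-1 : MvPolynomial σ R) ^ k * esymm σ R k * hsymm σ R (m - k)
        else 0 := by
    intro k
    rw [neg_pow, mul_assoc, mul_assoc, show ((-1 : PowerSeries (MvPolynomial σ R))) ^ k
        = PowerSeries.C ((-1 : MvPolynomial σ R) ^ k) by rw [map_pow, map_neg, map_one],
      PowerSeries.coeff_C_mul, ← mul_assoc (PowerSeries.X ^ k),
      mul_comm ((PowerSeries.X : PowerSeries (MvPolynomial σ R)) ^ k), mul_assoc,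
      mul_comm ((PowerSeries.X : PowerSeries (MvPolynomial σ R)) ^ k),
      ← mul_assoc, mul_assoc, PowerSeries.coeff_C_mul, PowerSeries.coeff_mul_X_pow',
      PowerSeries.coeff_mk]
    split_ifs <;> ring
  simp only [hterm] at h2
  have e1 : ∑ i ∈ range (m + 1),
        (if i ≤ m then (-1 : MvPolynomial σ R) ^ i * esymm σ R i * hsymm σ R (m - i) else 0)
      = ∑ i ∈ range (max m N + 1),
        (if i ≤ m then (-1 : MvPolynomial σ R) ^ i * esymm σ R i * hsymm σ R (m - i) else 0) :=
    Finset.sum_subset (Finset.range_subset_range.mpr (by omega)) fun i _ hi =>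
      if_neg (by simp only [Finset.mem_range] at hi; omega)
  have e2 : ∑ i ∈ range (N + 1),
        (if i ≤ m then (-1 : MvPolynomial σ R) ^ i * esymm σ R i * hsymm σ R (m - i) else 0)
      = ∑ i ∈ range (max m N + 1),
        (if i ≤ m then (-1 : MvPolynomial σ R) ^ i * esymm σ R i * hsymm σ R (m - i) else 0) := by
    refine Finset.sum_subset (Finset.range_subset_range.mpr (by omega)) fun i _ hi => ?_
    have hiN : N < i := by simp only [Finset.mem_range] at hi; omega
    split_ifs with h
    · rw [esymm_zero_of_gt _ hiN, mul_zero, zero_mul]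
    · rfl
  calc ∑ i ∈ range (m + 1), (-1 : MvPolynomial σ R) ^ i * esymm σ R i * hsymm σ R (m - i)
      = ∑ i ∈ range (m + 1),
        (if i ≤ m then (-1 : MvPolynomial σ R) ^ i * esymm σ R i * hsymm σ R (m - i) else 0) :=
        Finset.sum_congr rfl fun i hi =>
          (if_pos (Nat.lt_succ_iff.mp (Finset.mem_range.mp hi))).symm
    _ = ∑ i ∈ range (N + 1),
        (if i ≤ m then (-1 : MvPolynomial σ R) ^ i * esymm σ R i * hsymm σ R (m - i) else 0) := by
        rw [e1, ← e2]
    _ = 0 := h2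


lemma coeff_neg_one_pow_mul {n : ℕ} (d : Fin n →₀ ℕ) (i : ℕ) (p : MvPolynomial (Fin n) Rβ) :
    MvPolynomial.coeff d ((-1 : MvPolynomial (Fin n) Rβ) ^ i * p)
      = (-1 : Rβ) ^ i * MvPolynomial.coeff d p := by
  rw [show ((-1 : MvPolynomial (Fin n) Rβ)) ^ i = MvPolynomial.C ((-1 : Rβ) ^ i) by
    rw [map_pow, map_neg, map_one], MvPolynomial.coeff_C_mul]

lemma cβ_expand (n : ℕ) : cβ n = ∑ i ∈ Finset.range (n + 1),
    MvPolynomial.C ((-β) ^ i) * esymm (Fin n) Rβ i := by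
  rw [cβ, prod_one_sub]
  simp only [Finset.card_univ, Fintype.card_fin]
  refine Finset.sum_congr rfl fun k _ => ?_
  rw [esymm, show (-(MvPolynomial.C β : MvPolynomial (Fin n) Rβ)) ^ k
    = MvPolynomial.C ((-β) ^ k) by rw [← map_neg, ← map_pow]]

lemma esymm_hom (k : ℕ) : (esymm σ R k).IsHomogeneous k := by
  rw [esymm]
  apply MvPolynomial.IsHomogeneous.sum
  intro t ht
  have := MvPolynomial.IsHomogeneous.prod t (fun i => (X i : MvPolynomial σ R)) (fun _ => 1)
      (fun i _ => isHomogeneous_X _ _)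
  simpa [(Finset.mem_powersetCard.mp ht).2] using this

lemma hsymm_hom (k : ℕ) : (hsymm σ R k).IsHomogeneous k := by
  rw [hsymm_eq_sum]
  apply MvPolynomial.IsHomogeneous.sum
  intro l hl
  have h1 := (Finset.mem_finsuppAntidiag.mp hl).1
  have := MvPolynomial.IsHomogeneous.prod univ (fun i => (X i : MvPolynomial σ R) ^ l i)
      (fun i => l i) (fun i _ => isHomogeneous_X_pow _ _)
  simpa [h1] using this

/-- For `a ≥ 1`, the K-theoretic Segre class `G_a` equals
`∑_{k=0}^{n-1} β^k ( ∑_{i=0}^{k} (-1)^i e_i(x) h_{a+k-i}(x) )`. -/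
theorem stmt14 (n a : ℕ) (ha : 1 ≤ a) :
    Gcoeff n a =
      ((∑ k ∈ Finset.range n, MvPolynomial.C (β ^ k) *
          ∑ i ∈ Finset.range (k + 1),
            (-1 : MvPolynomial (Fin n) Rβ) ^ i * esymm (Fin n) Rβ i *
              hh n (a + k - i) : MvPolynomial (Fin n) Rβ) : MvPowerSeries (Fin n) Rβ) := by
  funext d
  set D := d.sum (fun _ e => e) with hD
  have hdeg : Finsupp.degree d = D := by rw [hD, Finsupp.degree, Finsupp.sum]; rfl
  have hvanish : ∀ i j : ℕ, i + j ≠ D →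
      MvPolynomial.coeff d (esymm (Fin n) Rβ i * hsymm (Fin n) Rβ j) = 0 := fun i j h =>
    ((esymm_hom i).mul (hsymm_hom j)).coeff_eq_zero (by rw [hdeg]; omega)
  set t : ℕ → ℕ → Rβ := fun i k => (-1 : Rβ) ^ i * β ^ (k + i) *
    MvPolynomial.coeff d (esymm (Fin n) Rβ i * hsymm (Fin n) Rβ (a + k)) with ht
  -- LHS
  have hb : ∀ k : ℕ, bβ n ((a : ℤ) + k) = cβ n * hh n (a + k) := by
    intro k
    rw [bβ, if_neg (by omega), show (((a : ℤ) + k)).toNat = a + k by omega]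
  have hterm : ∀ k : ℕ, β ^ k * MvPolynomial.coeff d (bβ n ((a : ℤ) + k))
      = ∑ i ∈ Finset.range (n + 1), t i k := by
    intro k
    rw [hb k, cβ_expand, Finset.sum_mul, MvPolynomial.coeff_sum, Finset.mul_sum]
    refine Finset.sum_congr rfl fun i _ => ?_
    rw [mul_assoc, MvPolynomial.coeff_C_mul]
    simp only [ht, hh]
    rw [neg_pow]
    ring
  have hLHS : Gcoeff n a d
      = ∑ k ∈ Finset.range (D + a + 1), ∑ i ∈ Finset.range (n + 1), t i k := by
    rw [Gcoeff]
    simp only [Int.natAbs_natCast]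
    exact Finset.sum_congr rfl fun k _ => hterm k
  -- RHS
  have hRHS : ((∑ k ∈ Finset.range n, MvPolynomial.C (β ^ k) *
          ∑ i ∈ Finset.range (k + 1),
            (-1 : MvPolynomial (Fin n) Rβ) ^ i * esymm (Fin n) Rβ i *
              hh n (a + k - i) : MvPolynomial (Fin n) Rβ) : MvPowerSeries (Fin n) Rβ) d
      = ∑ m ∈ Finset.range n, ∑ i ∈ Finset.range (m + 1),
          (-1 : Rβ) ^ i * β ^ m * MvPolynomial.coeff d (esymm (Fin n) Rβ i * hsymm (Fin n) Rβ (a + m - i)) := by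
    rw [show ((∑ k ∈ Finset.range n, MvPolynomial.C (β ^ k) *
          ∑ i ∈ Finset.range (k + 1),
            (-1 : MvPolynomial (Fin n) Rβ) ^ i * esymm (Fin n) Rβ i *
              hh n (a + k - i) : MvPolynomial (Fin n) Rβ) : MvPowerSeries (Fin n) Rβ) d
        = MvPolynomial.coeff d (∑ k ∈ Finset.range n, MvPolynomial.C (β ^ k) *
          ∑ i ∈ Finset.range (k + 1),
            (-1 : MvPolynomial (Fin n) Rβ) ^ i * esymm (Fin n) Rβ i *
              hh n (a + k - i)) from MvPolynomial.coeff_coe _ _]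
    rw [MvPolynomial.coeff_sum]
    refine Finset.sum_congr rfl fun m _ => ?_
    rw [MvPolynomial.coeff_C_mul, MvPolynomial.coeff_sum, Finset.mul_sum]
    refine Finset.sum_congr rfl fun i _ => ?_
    rw [mul_assoc ((-1 : MvPolynomial (Fin n) Rβ) ^ i), coeff_neg_one_pow_mul]
    simp only [hh]
    ring
  rw [hLHS, hRHS]
  by_cases hDa : a ≤ D
  · set q := D - a with hq
    -- collapse LHS
    have hcolL : ∑ k ∈ Finset.range (D + a + 1), ∑ i ∈ Finset.range (n + 1), t i k
        = ∑ i ∈ Finset.range (n + 1), if i ≤ q then t i (q - i) else 0 := by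
      rw [Finset.sum_comm]
      refine Finset.sum_congr rfl fun i _ => ?_
      by_cases hi : i ≤ q
      · rw [if_pos hi]
        refine Finset.sum_eq_single (q - i) (fun k _ hk => ?_) (fun h => absurd
          (Finset.mem_range.mpr (by omega)) h)
        simp only [ht]
        rw [hvanish i (a + k) (by omega), mul_zero]
      · rw [if_neg hi]
        refine Finset.sum_eq_zero fun k _ => ?_
        simp only [ht]
        rw [hvanish i (a + k) (by omega), mul_zero]
    rw [hcolL]
    -- collapse RHS
    have hcolR : ∑ m ∈ Finset.range n, ∑ i ∈ Finset.range (m + 1),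
          (-1 : Rβ) ^ i * β ^ m * MvPolynomial.coeff d (esymm (Fin n) Rβ i * hsymm (Fin n) Rβ (a + m - i))
        = if q < n then ∑ i ∈ Finset.range (q + 1),
            (-1 : Rβ) ^ i * β ^ q * MvPolynomial.coeff d (esymm (Fin n) Rβ i * hsymm (Fin n) Rβ (a + q - i)) else 0 := by
      by_cases hqn : q < n
      · rw [if_pos hqn]
        refine Finset.sum_eq_single q (fun m _ hm => Finset.sum_eq_zero fun i hi => ?_)
          (fun h => absurd (Finset.mem_range.mpr hqn) h)
        have him : i ≤ m := Nat.lt_succ_iff.mp (Finset.mem_range.mp hi)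
        rw [hvanish i (a + m - i) (by omega), mul_zero]
      · rw [if_neg hqn]
        refine Finset.sum_eq_zero fun m hm => Finset.sum_eq_zero fun i hi => ?_
        have him : i ≤ m := Nat.lt_succ_iff.mp (Finset.mem_range.mp hi)
        have hmn : m < n := Finset.mem_range.mp hm
        rw [hvanish i (a + m - i) (by omega), mul_zero]
    rw [hcolR]
    by_cases hqn : q < n
    · rw [if_pos hqn]
      rw [show ∑ i ∈ Finset.range (n + 1), (if i ≤ q then t i (q - i) else 0)
          = ∑ i ∈ Finset.range (q + 1), (if i ≤ q then t i (q - i) else 0) from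
        (Finset.sum_subset (Finset.range_subset_range.mpr (by omega))
          (fun i _ hi => if_neg (by simp only [Finset.mem_range] at hi; omega))).symm]
      refine Finset.sum_congr rfl fun i hi => ?_
      have hiq : i ≤ q := Nat.lt_succ_iff.mp (Finset.mem_range.mp hi)
      rw [if_pos hiq]
      simp only [ht]
      rw [show q - i + i = q by omega, show a + (q - i) = a + q - i by omega]
    · rw [if_neg hqn]
      have hnq : n ≤ q := by omega
      have h1 : ∑ i ∈ Finset.range (n + 1), (if i ≤ q then t i (q - i) else 0)
          = β ^ q * MvPolynomial.coeff d (∑ i ∈ Finset.range (n + 1),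
              (-1 : MvPolynomial (Fin n) Rβ) ^ i * esymm (Fin n) Rβ i
                * hsymm (Fin n) Rβ (D - i)) := by
        rw [MvPolynomial.coeff_sum, Finset.mul_sum]
        refine Finset.sum_congr rfl fun i hi => ?_
        have hin : i ≤ n := Nat.lt_succ_iff.mp (Finset.mem_range.mp hi)
        rw [if_pos (by omega)]
        simp only [ht]
        rw [show q - i + i = q by omega, show a + (q - i) = D - i by omega,
          mul_assoc ((-1 : MvPolynomial (Fin n) Rβ) ^ i), coeff_neg_one_pow_mul]
        ring
      rw [h1]
      have h2 : ∑ i ∈ Finset.range (n + 1),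
            (-1 : MvPolynomial (Fin n) Rβ) ^ i * esymm (Fin n) Rβ i
              * hsymm (Fin n) Rβ (D - i)
          = ∑ i ∈ Finset.range (D + 1),
            (-1 : MvPolynomial (Fin n) Rβ) ^ i * esymm (Fin n) Rβ i
              * hsymm (Fin n) Rβ (D - i) := by
        refine Finset.sum_subset (Finset.range_subset_range.mpr (by omega)) fun i _ hi => ?_
        have hni : n < i := by simp only [Finset.mem_range] at hi; omega
        rw [esymm_zero_of_gt (σ := Fin n) (R := Rβ) i (by simpa using hni), mul_zero, zero_mul]
      rw [h2, key D (by omega), MvPolynomial.coeff_zero, mul_zero]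
  · -- D < a : everything vanishes
    trans (0 : Rβ)
    · refine Finset.sum_eq_zero fun k _ => Finset.sum_eq_zero fun i _ => ?_
      simp only [ht]
      rw [hvanish i (a + k) (by omega), mul_zero]
    · symm
      refine Finset.sum_eq_zero fun m hm => Finset.sum_eq_zero fun i hi => ?_
      have him : i ≤ m := Nat.lt_succ_iff.mp (Finset.mem_range.mp hi)
      rw [hvanish i (a + m - i) (by omega), mul_zero]
end
end

section
/- With G_a defined as the coefficient of u^a (a ≥ 1) in the Laurent series (1/(1 - βu^{-1})) ∏_{j=1}^{n} (1 - βx_j)/(1 - x_j u), one has G_a(x_1,...,x_n) = ∑_{k=0}^{n-1} (-β)^k s_{(a,1^k)}(x_1,...,x_n), where s_{(a,1^k)} is the Schur polynomial of the hook partition (a,1^k). -/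
noncomputable section

open MvPolynomial

/-- `h` with an integer index, vanishing in negative degrees. -/
def hZ (n : ℕ) (m : ℤ) : MvPolynomial (Fin n) Rβ :=
  if m < 0 then 0 else hh n m.toNat

/-- Schur polynomial of the hook partition `(a, 1^k)` in `n` variables, via the
Jacobi–Trudi determinant `det (h_{λ_i + j - i})`. -/
def hookSchur (n a k : ℕ) : MvPolynomial (Fin n) Rβ :=
  Matrix.det (Matrix.of fun i j : Fin (k + 1) =>
    hZ n (((if (i : ℕ) = 0 then a else 1 : ℕ) : ℤ) + (j : ℤ) - (i : ℤ)))

section Aux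
open Finset
lemma prod_multiset_X (n : ℕ) (t : Multiset (Fin n)) :
    ((t.map (X : Fin n → MvPolynomial (Fin n) Rβ)).prod)
      = monomial (Multiset.toFinsupp t) 1 := by
  induction t using Multiset.induction_on with
  | empty => simp [monomial_zero']
  | cons a s ih =>
      rw [Multiset.map_cons, Multiset.prod_cons, ih, X, monomial_mul,
        show (a ::ₘ s) = ({a} + s : Multiset (Fin n)) by rw [Multiset.singleton_add],
        Multiset.toFinsupp_add, Multiset.toFinsupp_singleton, one_mul]

lemma sum_eq_card {n : ℕ} (d : Fin n →₀ ℕ) :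
    (d.sum fun _ e => e) = Multiset.card (Finsupp.toMultiset d) := by
  rw [Finsupp.card_toMultiset]; rfl

lemma toFinsupp_sum {n : ℕ} (t : Multiset (Fin n)) :
    ((Multiset.toFinsupp t).sum fun _ e => e) = Multiset.card t := by
  rw [sum_eq_card, Multiset.toFinsupp_toMultiset]

lemma coeff_hh (n m : ℕ) (d : Fin n →₀ ℕ) :
    coeff d (hh n m) = if (d.sum fun _ e => e) = m then 1 else 0 := by
  classical
  rw [hh, hsymm]
  have h1 : ∀ s : Sym (Fin n) m,
      coeff d ((s.1).map (X : Fin n → MvPolynomial (Fin n) Rβ)).prod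
        = if Multiset.toFinsupp s.1 = d then 1 else 0 := by
    intro s; rw [prod_multiset_X, coeff_monomial]
  rw [MvPolynomial.coeff_sum]
  have h2 := Finset.sum_congr rfl (fun s _ => h1 s) (s₁ := Finset.univ)
  rw [h2]
  by_cases hd : (d.sum fun _ e => e) = m
  · rw [if_pos hd]
    have hcard : Multiset.card (Finsupp.toMultiset d) = m := by
      rw [← sum_eq_card]; exact hd
    set s₀ : Sym (Fin n) m := ⟨Finsupp.toMultiset d, hcard⟩ with hs₀
    rw [Fintype.sum_eq_single s₀]
    · rw [if_pos]
      rw [hs₀]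
      exact Finsupp.toMultiset_toFinsupp d
    · intro s hne
      rw [if_neg]
      intro hEq
      apply hne
      apply Sym.coe_injective
      show s.1 = s₀.1
      exact (Multiset.toFinsupp_toMultiset s.1).symm.trans (congrArg Finsupp.toMultiset hEq)
  · rw [if_neg hd, Finset.sum_eq_zero]
    intro s _
    rw [if_neg]
    intro hEq
    apply hd
    have := congrArg (fun f : Fin n →₀ ℕ => f.sum fun _ e => e) hEq
    rw [← this, toFinsupp_sum]
    exact s.2

def ind {n : ℕ} (t : Finset (Fin n)) : Fin n →₀ ℕ := ∑ i ∈ t, Finsupp.single i 1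

lemma ind_apply {n : ℕ} (t : Finset (Fin n)) (i : Fin n) :
    ind t i = if i ∈ t then 1 else 0 := by
  classical
  rw [ind, Finset.sum_apply']
  by_cases h : i ∈ t
  · rw [if_pos h, Finset.sum_eq_single i]
    · simp
    · intro b _ hb; exact Finsupp.single_eq_of_ne' hb
    · intro h'; exact absurd h h'
  · rw [if_neg h, Finset.sum_eq_zero]
    intro b hb
    exact Finsupp.single_eq_of_ne (fun hbi => h (hbi ▸ hb))

lemma ind_sum {n : ℕ} (t : Finset (Fin n)) : (ind t).sum (fun _ e => e) = t.card := by
  classical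
  rw [ind]
  induction t using Finset.induction_on with
  | empty => simp
  | @insert a s ha ih =>
      rw [Finset.sum_insert ha, Finsupp.sum_add_index' (fun _ => rfl) (fun _ _ _ => rfl), ih,
        Finset.card_insert_of_notMem ha, Finsupp.sum_single_index rfl, add_comm]

lemma ind_le_iff {n : ℕ} (t : Finset (Fin n)) (d : Fin n →₀ ℕ) :
    ind t ≤ d ↔ t ⊆ d.support := by
  rw [Finsupp.le_iff]
  constructor
  · intro h i hi
    rw [Finsupp.mem_support_iff]
    have h2 := h i (by rw [Finsupp.mem_support_iff, ind_apply, if_pos hi]; norm_num)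
    rw [ind_apply, if_pos hi] at h2
    omega
  · intro h i hi
    rw [ind_apply]
    by_cases hit : i ∈ t
    · rw [if_pos hit]
      have := h hit
      rw [Finsupp.mem_support_iff] at this
      omega
    · rw [if_neg hit]; exact Nat.zero_le _

lemma sub_sum_add {n : ℕ} (t : Finset (Fin n)) (d : Fin n →₀ ℕ) (h : ind t ≤ d) :
    ((d - ind t).sum fun _ e => e) + t.card = d.sum fun _ e => e := by
  have h1 : d - ind t + ind t = d := tsub_add_cancel_of_le h
  have h2 := congrArg (fun f : Fin n →₀ ℕ => f.sum fun _ e => e) h1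
  rw [Finsupp.sum_add_index' (fun _ => rfl) (fun _ _ _ => rfl), ind_sum] at h2
  exact h2

lemma coeff_eh (n : ℕ) (j m : ℕ) (d : Fin n →₀ ℕ) :
    coeff d (esymm (Fin n) Rβ j * hh n m)
      = if (d.sum fun _ e => e) = j + m then ((d.support.card.choose j : ℕ) : Rβ) else 0 := by
  classical
  rw [esymm_eq_sum_monomial, Finset.sum_mul, MvPolynomial.coeff_sum]
  have key : ∀ t ∈ Finset.powersetCard j (Finset.univ : Finset (Fin n)),
      coeff d ((monomial (∑ i ∈ t, Finsupp.single i 1)) (1:Rβ) * hh n m)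
        = if (t ⊆ d.support ∧ (d.sum fun _ e => e) = j + m) then (1:Rβ) else 0 := by
    intro t ht
    have hcard : t.card = j := (Finset.mem_powersetCard.mp ht).2
    have hind : (∑ i ∈ t, Finsupp.single i 1) = ind t := rfl
    rw [hind, coeff_monomial_mul']
    by_cases hle : ind t ≤ d
    · rw [if_pos hle, one_mul, coeff_hh]
      have hsub := (ind_le_iff t d).mp hle
      have hsum := sub_sum_add t d hle
      rw [hcard] at hsum
      by_cases hm : ((d - ind t).sum fun _ e => e) = m
      · rw [if_pos hm, if_pos ⟨hsub, by omega⟩]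
      · rw [if_neg hm, if_neg]
        rintro ⟨-, h2⟩
        omega
    · rw [if_neg hle, if_neg]
      rintro ⟨h1, -⟩
      exact hle ((ind_le_iff t d).mpr h1)
  rw [Finset.sum_congr rfl key]
  by_cases hP : (d.sum fun _ e => e) = j + m
  · rw [if_pos hP]
    have : ∀ t ∈ Finset.powersetCard j (Finset.univ : Finset (Fin n)),
        (if (t ⊆ d.support ∧ (d.sum fun _ e => e) = j + m) then (1:Rβ) else 0)
          = if t ⊆ d.support then (1:Rβ) else 0 := by
      intro t _
      by_cases h : t ⊆ d.support
      · rw [if_pos ⟨h, hP⟩, if_pos h]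
      · rw [if_neg (fun hc => h hc.1), if_neg h]
    rw [Finset.sum_congr rfl this, Finset.sum_boole]
    have hfil : Finset.filter (· ⊆ d.support) (Finset.powersetCard j Finset.univ)
        = Finset.powersetCard j d.support := by
      ext t
      simp [Finset.mem_powersetCard, Finset.mem_filter]
      tauto
    rw [hfil, Finset.card_powersetCard]
  · rw [if_neg hP, Finset.sum_eq_zero]
    intro t _
    rw [if_neg]
    rintro ⟨-, h⟩
    exact hP h

lemma cβ_eq (n : ℕ) :
    cβ n = ∑ j ∈ Finset.range (n+1), C ((-β)^j) * esymm (Fin n) Rβ j := by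
  classical
  have h1 : cβ n = ∏ j : Fin n, ((C (-β) * X j) + 1) := by
    rw [cβ]; apply Finset.prod_congr rfl; intro i _; rw [map_neg]; ring
  rw [h1, Finset.prod_add]
  rw [Finset.sum_powerset]
  rw [Finset.card_univ, Fintype.card_fin]
  apply Finset.sum_congr rfl
  intro j _
  rw [esymm, Finset.mul_sum, map_pow]
  apply Finset.sum_congr rfl
  intro t ht
  have hcard : t.card = j := (Finset.mem_powersetCard.mp ht).2
  rw [Finset.prod_mul_distrib, Finset.prod_const, hcard, Finset.prod_const_one, mul_one]

lemma hZ_coe (n a : ℕ) : hZ n (a : ℤ) = hh n a := by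
  rw [hZ, if_neg (by omega)]
  norm_num

lemma hZ_neg (n : ℕ) (m : ℤ) (h : m < 0) : hZ n m = 0 := if_pos h

lemma hook_base (n a : ℕ) : hookSchur n a 0 = hh n a := by
  rw [hookSchur, Matrix.det_fin_one, Matrix.of_apply]
  norm_num [hZ_coe]

lemma hook_rec (n a k : ℕ) :
    hookSchur n a (k+1) = hh n a * hookSchur n 1 k - hookSchur n (a+1) k := by
  rw [hookSchur, Matrix.det_succ_column_zero, Fin.sum_univ_succ, Fin.sum_univ_succ]
  set M : Matrix (Fin (k+2)) (Fin (k+2)) (MvPolynomial (Fin n) Rβ) :=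
    Matrix.of (fun i j : Fin (k + 2) =>
      hZ n (((if (i : ℕ) = 0 then a else 1 : ℕ) : ℤ) + (j : ℤ) - (i : ℤ))) with hM
  have htail : ∀ i : Fin k, ((-1:MvPolynomial (Fin n) Rβ)) ^ (((i.succ.succ : Fin (k+2))) : ℕ) *
      M i.succ.succ 0 * (M.submatrix (Fin.succAbove i.succ.succ) Fin.succ).det = 0 := by
    intro i
    have hz : M i.succ.succ 0 = 0 := by
      rw [hM, Matrix.of_apply]
      apply hZ_neg
      have h2 : ((i.succ.succ : Fin (k+2)) : ℕ) = (i : ℕ) + 2 := rfl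
      rw [h2, if_neg (by omega)]
      simp only [Fin.val_zero]
      push_cast
      omega
    rw [hz, mul_zero, zero_mul]
  rw [Finset.sum_eq_zero (fun i _ => htail i), add_zero]
  have h00 : M 0 0 = hh n a := by
    rw [hM, Matrix.of_apply]
    norm_num [hZ_coe]
  have h10 : M (Fin.succ 0) 0 = 1 := by
    rw [hM, Matrix.of_apply]
    have hv : ((Fin.succ (0 : Fin (k+1)) : Fin (k+2)) : ℕ) = 1 := rfl
    rw [hv]
    norm_num
    rw [show (0:ℤ) = ((0:ℕ):ℤ) from rfl, hZ_coe, hh, hsymm_zero]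
  have e1 : M.submatrix (Fin.succAbove 0) Fin.succ
      = Matrix.of (fun i j : Fin (k + 1) =>
          hZ n (((if (i : ℕ) = 0 then 1 else 1 : ℕ) : ℤ) + (j : ℤ) - (i : ℤ))) := by
    ext i j
    rw [Matrix.submatrix_apply, Fin.succAbove_zero, hM, Matrix.of_apply, Matrix.of_apply]
    rw [if_neg (show ¬((i.succ : Fin (k+2)):ℕ) = 0 by simp), ite_self]
    congr 1
    push_cast [Fin.val_succ]
    ring
  have e2 : M.submatrix (Fin.succAbove (0:Fin (k+1)).succ) Fin.succ
      = Matrix.of (fun i j : Fin (k + 1) =>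
          hZ n (((if (i : ℕ) = 0 then a+1 else 1 : ℕ) : ℤ) + (j : ℤ) - (i : ℤ))) := by
    ext i j
    rw [Matrix.submatrix_apply, hM, Matrix.of_apply, Matrix.of_apply]
    rcases Fin.eq_zero_or_eq_succ i with hi | ⟨i', hi⟩
    · subst hi
      have hsa : ((0:Fin (k+1)).succ).succAbove 0 = 0 := by
        apply Fin.succAbove_of_castSucc_lt
        simp [Fin.lt_def]
      rw [hsa]
      norm_num
      congr 1
      push_cast [Fin.val_succ]
      ring
    · subst hi
      have hsa : ((0:Fin (k+1)).succ).succAbove i'.succ = i'.succ.succ := by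
        apply Fin.succAbove_of_le_castSucc
        simp [Fin.le_def]
      rw [hsa]
      rw [if_neg (show ¬((i'.succ.succ : Fin (k+2)):ℕ) = 0 by simp), 
        if_neg (show ¬((i'.succ : Fin (k+1)):ℕ) = 0 by simp)]
      congr 1
      push_cast [Fin.val_succ]
      ring
  rw [e1, e2, h00, h10, ← hookSchur, ← hookSchur]
  simp [Fin.val_succ]
  ring

def EE (n : ℕ) : ℕ → MvPolynomial (Fin n) Rβ
  | 0 => 1
  | (k+1) => hookSchur n 1 k

lemma hook_expand (n : ℕ) : ∀ k a, hookSchur n a k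
    = ∑ i ∈ Finset.range (k+1), C ((-1:Rβ)^i) * (hh n (a+i) * EE n (k-i)) := by
  intro k
  induction k with
  | zero => intro a; simp [hook_base, EE]
  | succ k ih =>
      intro a
      rw [hook_rec, ih (a+1)]
      conv_rhs => rw [Finset.sum_range_succ']
      have hterm : ∀ i ∈ Finset.range (k+1),
          C ((-1:Rβ)^(i+1)) * (hh n (a+(i+1)) * EE n (k+1-(i+1)))
            = - (C ((-1:Rβ)^i) * (hh n (a+1+i) * EE n (k-i))) := by
        intro i _
        rw [show a+(i+1) = a+1+i by omega, show k+1-(i+1) = k-i by omega, pow_succ]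
        simp
        ring
      rw [Finset.sum_congr rfl hterm, Finset.sum_neg_distrib]
      show _ = (- _) + _
      simp [EE]
      ring

lemma hook_zero_row (n k : ℕ) : hookSchur n 0 (k+1) = 0 := by
  rw [hookSchur]
  apply Matrix.det_zero_of_row_eq (i := 0) (j := 1)
  · exact (by simp : (0 : Fin (k+2)) ≠ 1)
  · funext j
    rw [Matrix.of_apply, Matrix.of_apply]
    have h0 : ((0 : Fin (k+2)) : ℕ) = 0 := rfl
    have h1 : ((1 : Fin (k+2)) : ℕ) = 1 := rfl
    rw [h0, h1]
    norm_num

lemma EE_vanish (n k : ℕ) :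
    ∑ i ∈ Finset.range ((k+1)+1), C ((-1:Rβ)^i) * (hh n i * EE n (k+1-i)) = 0 := by
  have h := hook_expand n (k+1) 0
  rw [hook_zero_row] at h
  simp only [zero_add] at h
  exact h.symm

lemma alt_choose_sum (p t : ℕ) (hp : 1 ≤ p) (hpt : p ≤ t) :
    ∑ j ∈ Finset.range (t+1), (-1:Rβ)^j * ((p.choose j : ℕ) : Rβ) = 0 := by
  rw [← Finset.sum_subset (Finset.range_subset_range.mpr (by omega) :
      Finset.range (p+1) ⊆ Finset.range (t+1))]
  · have h0 : ((∑ i ∈ Finset.range (p+1), ((-1)^i * (p.choose i : ℤ)) : ℤ) : Rβ)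
        = ∑ j ∈ Finset.range (p+1), (-1:Rβ)^j * ((p.choose j : ℕ) : Rβ) := by
      push_cast
      rfl
    rw [← h0, Int.alternating_sum_range_choose, if_neg (by omega), Int.cast_zero]
  · intro x hx hnx
    rw [Finset.mem_range] at hx hnx
    rw [Nat.choose_eq_zero_of_lt (by omega), Nat.cast_zero, mul_zero]

lemma neg_pow_split (i t : ℕ) (h : i ≤ t) : (-1:Rβ)^i = (-1)^t * (-1)^(t-i) := by
  rw [← pow_add, show t + (t-i) = i + 2*(t-i) by omega, pow_add, pow_mul]
  norm_num

lemma alt_choose_sum_reflect (p t : ℕ) (hp : 1 ≤ p) (hpt : p ≤ t) :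
    ∑ i ∈ Finset.range (t+1), (-1:Rβ)^i * ((p.choose (t-i) : ℕ) : Rβ) = 0 := by
  have h1 : ∀ i ∈ Finset.range (t+1), (-1:Rβ)^i * ((p.choose (t-i) : ℕ) : Rβ)
      = (-1)^t * ((-1)^(t-i) * ((p.choose (t-i) : ℕ) : Rβ)) := by
    intro i hi
    rw [Finset.mem_range] at hi
    rw [neg_pow_split i t (by omega)]
    ring
  rw [Finset.sum_congr rfl h1, ← Finset.mul_sum]
  have h2 := Finset.sum_range_reflect (fun j => (-1:Rβ)^j * ((p.choose j : ℕ) : Rβ)) (t+1)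
  simp only [Nat.add_sub_cancel] at h2
  rw [h2, alt_choose_sum p t hp hpt, mul_zero]

lemma support_card_le (n : ℕ) (d : Fin n →₀ ℕ) :
    d.support.card ≤ d.sum fun _ e => e := by
  rw [Finsupp.sum]
  calc d.support.card = ∑ _i ∈ d.support, 1 := Finset.card_eq_sum_ones _
    _ ≤ ∑ i ∈ d.support, d i := by
        apply Finset.sum_le_sum
        intro i hi
        rw [Finsupp.mem_support_iff] at hi
        omega

lemma esymm_vanish (n t : ℕ) (ht : 1 ≤ t) :
    ∑ i ∈ Finset.range (t+1), C ((-1:Rβ)^i) * (hh n i * esymm (Fin n) Rβ (t-i)) = 0 := by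
  apply MvPolynomial.ext
  intro d
  rw [MvPolynomial.coeff_sum, MvPolynomial.coeff_zero]
  have h1 : ∀ i ∈ Finset.range (t+1),
      coeff d (C ((-1:Rβ)^i) * (hh n i * esymm (Fin n) Rβ (t-i)))
        = (-1:Rβ)^i * (if (d.sum fun _ e => e) = t
            then ((d.support.card.choose (t-i) : ℕ) : Rβ) else 0) := by
    intro i hi
    rw [Finset.mem_range] at hi
    rw [coeff_C_mul, mul_comm (hh n i), coeff_eh]
    congr 1
    rw [show (t-i) + i = t by omega]
  rw [Finset.sum_congr rfl h1]
  by_cases hd : (d.sum fun _ e => e) = t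
  · simp only [if_pos hd]
    apply alt_choose_sum_reflect
    · by_contra h
      have : d.support.card = 0 := by omega
      rw [Finset.card_eq_zero, Finsupp.support_eq_empty] at this
      rw [this] at hd
      simp at hd
      omega
    · calc d.support.card ≤ d.sum fun _ e => e := support_card_le n d
        _ = t := hd
  · simp only [if_neg hd, mul_zero, Finset.sum_const_zero]

lemma EE_eq (n : ℕ) : ∀ j, EE n j = esymm (Fin n) Rβ j := by
  intro j
  induction j using Nat.strong_induction_on with
  | _ j ih =>
      match j with
      | 0 => simp [EE, esymm_zero]
      | (k+1) =>
          have h1 := EE_vanish n k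
          have h2 := esymm_vanish n (k+1) (by omega)
          rw [Finset.sum_range_succ'] at h1 h2
          have h3 : ∀ i ∈ Finset.range (k+1),
              C ((-1:Rβ)^(i+1)) * (hh n (i+1) * EE n (k+1-(i+1)))
                = C ((-1:Rβ)^(i+1)) * (hh n (i+1) * esymm (Fin n) Rβ (k+1-(i+1))) := by
            intro i hi
            rw [Finset.mem_range] at hi
            rw [ih (k+1-(i+1)) (by omega)]
          rw [Finset.sum_congr rfl h3] at h1
          have h4 := add_left_cancel (h1.trans h2.symm)
          simpa [hh, hsymm_zero] using h4

lemma coeff_hook (n a k : ℕ) (d : Fin n →₀ ℕ) :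
    coeff d (hookSchur n a k)
      = if (d.sum fun _ e => e) = a + k
          then ∑ i ∈ Finset.range (k+1), (-1:Rβ)^i * ((d.support.card.choose (k-i) : ℕ) : Rβ)
          else 0 := by
  rw [hook_expand n k a, MvPolynomial.coeff_sum]
  have h1 : ∀ i ∈ Finset.range (k+1),
      coeff d (C ((-1:Rβ)^i) * (hh n (a+i) * EE n (k-i)))
        = (-1:Rβ)^i * (if (d.sum fun _ e => e) = a + k
            then ((d.support.card.choose (k-i) : ℕ) : Rβ) else 0) := by
    intro i hi
    rw [Finset.mem_range] at hi
    rw [EE_eq, coeff_C_mul, mul_comm (hh n (a+i)), coeff_eh]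
    congr 2
    rw [show (k-i) + (a+i) = a + k by omega]
  rw [Finset.sum_congr rfl h1]
  by_cases hd : (d.sum fun _ e => e) = a + k
  · simp only [if_pos hd]
  · simp only [if_neg hd, mul_zero, Finset.sum_const_zero]

lemma coeff_cβ_hh (n m : ℕ) (d : Fin n →₀ ℕ) :
    coeff d (cβ n * hh n m)
      = ∑ j ∈ Finset.range (n+1), (-β)^j *
          (if (d.sum fun _ e => e) = j + m then ((d.support.card.choose j : ℕ) : Rβ) else 0) := by
  rw [cβ_eq, Finset.sum_mul, MvPolynomial.coeff_sum]
  apply Finset.sum_congr rfl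
  intro j _
  rw [mul_assoc, coeff_C_mul, coeff_eh]

end Aux

/-- For `a ≥ 1`, the one-row Grothendieck polynomial `G_a` is an alternating sum of
hook Schur polynomials: `G_a(x) = ∑_{k=0}^{n-1} (-β)^k s_{(a,1^k)}(x)`. -/
theorem stmt15 (n a : ℕ) (ha : 1 ≤ a) :
    Gcoeff n a =
      ((∑ k ∈ Finset.range n, MvPolynomial.C ((-β) ^ k) * hookSchur n a k :
          MvPolynomial (Fin n) Rβ) : MvPowerSeries (Fin n) Rβ) := by

  funext d
  set D : ℕ := d.sum fun _ e => e with hD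
  set p : ℕ := d.support.card with hp
  have hRHS : (((∑ k ∈ Finset.range n, MvPolynomial.C ((-β) ^ k) * hookSchur n a k :
      MvPolynomial (Fin n) Rβ)) : MvPowerSeries (Fin n) Rβ) d
      = ∑ k ∈ Finset.range n, (-β)^k * coeff d (hookSchur n a k) := by
    have := MvPolynomial.coeff_coe (∑ k ∈ Finset.range n,
      MvPolynomial.C ((-β) ^ k) * hookSchur n a k) d
    rw [show (((∑ k ∈ Finset.range n, MvPolynomial.C ((-β) ^ k) * hookSchur n a k :
      MvPolynomial (Fin n) Rβ)) : MvPowerSeries (Fin n) Rβ) d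
        = MvPowerSeries.coeff d ((∑ k ∈ Finset.range n,
          MvPolynomial.C ((-β) ^ k) * hookSchur n a k : MvPolynomial (Fin n) Rβ) :
            MvPowerSeries (Fin n) Rβ) from rfl, this, MvPolynomial.coeff_sum]
    apply Finset.sum_congr rfl
    intro k _
    rw [coeff_C_mul]
  have hb : ∀ k : ℕ, bβ n ((a:ℤ) + k) = cβ n * hh n (a+k) := by
    intro k
    rw [bβ, if_neg (by omega)]
    have h : ((a:ℤ) + k).toNat = a + k := by omega
    rw [h]
  have hLHS : Gcoeff n a d = ∑ k ∈ Finset.range (D + a + 1),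
      β^k * coeff d (cβ n * hh n (a+k)) := by
    rw [Gcoeff]
    simp only [Int.natAbs_natCast, hb]
    rfl
  rw [hLHS, hRHS]
  -- expand both sides
  have hL2 : ∀ k ∈ Finset.range (D + a + 1), β^k * coeff d (cβ n * hh n (a+k))
      = ∑ j ∈ Finset.range (n+1), β^k * ((-β)^j *
          (if D = j + (a+k) then ((p.choose j : ℕ) : Rβ) else 0)) := by
    intro k _
    rw [coeff_cβ_hh, Finset.mul_sum]
  rw [Finset.sum_congr rfl hL2, Finset.sum_comm]
  have inner : ∀ j ∈ Finset.range (n+1),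
      (∑ k ∈ Finset.range (D + a + 1), β^k * ((-β)^j *
          (if D = j + (a+k) then ((p.choose j : ℕ) : Rβ) else 0)))
        = if a + j ≤ D then β^(D-a-j) * ((-β)^j * ((p.choose j : ℕ) : Rβ)) else 0 := by
    intro j _
    by_cases hja : a + j ≤ D
    · rw [if_pos hja, Finset.sum_eq_single (D - a - j)]
      · rw [if_pos (by omega)]
      · intro k _ hne
        rw [if_neg (by omega), mul_zero, mul_zero]
      · intro hmem
        exact absurd (Finset.mem_range.mpr (by omega)) hmem
    · rw [if_neg hja, Finset.sum_eq_zero]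
      intro k _
      rw [if_neg (by omega), mul_zero, mul_zero]
  rw [Finset.sum_congr rfl inner]
  have hRk : ∀ k ∈ Finset.range n, (-β)^k * coeff d (hookSchur n a k)
      = if D = a + k then (-β)^k *
          ∑ i ∈ Finset.range (k+1), (-1:Rβ)^i * ((p.choose (k-i) : ℕ) : Rβ) else 0 := by
    intro k _
    rw [coeff_hook]
    by_cases hk : D = a + k
    · rw [if_pos hk, if_pos hk]
    · rw [if_neg hk, if_neg hk, mul_zero]
  rw [Finset.sum_congr rfl hRk]
  by_cases hcase : a ≤ D
  · set r : ℕ := D - a with hr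
    have hpn : p ≤ n := by
      calc p ≤ Fintype.card (Fin n) := Finset.card_le_univ _
        _ = n := Fintype.card_fin n
    have hp1 : 1 ≤ p := by
      by_contra hcon
      have h0 : p = 0 := by omega
      rw [hp] at h0
      rw [Finset.card_eq_zero, Finsupp.support_eq_empty] at h0
      rw [hD, h0] at hcase
      simp at hcase
      omega
    by_cases hrn : r < n
    · -- both sides equal β^r * ∑_{j ≤ r} (-1)^j choose p j
      have hRHS2 : (∑ k ∈ Finset.range n, if D = a + k then (-β)^k *
          ∑ i ∈ Finset.range (k+1), (-1:Rβ)^i * ((p.choose (k-i) : ℕ) : Rβ) else 0)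
            = (-β)^r * ∑ i ∈ Finset.range (r+1), (-1:Rβ)^i * ((p.choose (r-i) : ℕ) : Rβ) := by
        rw [Finset.sum_eq_single r]
        · rw [if_pos (by omega)]
        · intro k _ hne
          rw [if_neg (by omega)]
        · intro hmem
          exact absurd (Finset.mem_range.mpr (by omega)) hmem
      rw [hRHS2]
      have hLHS2 : (∑ j ∈ Finset.range (n+1), if a + j ≤ D
          then β^(D-a-j) * ((-β)^j * ((p.choose j : ℕ) : Rβ)) else 0)
            = ∑ j ∈ Finset.range (r+1), β^(r-j) * ((-β)^j * ((p.choose j : ℕ) : Rβ)) := by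
        rw [← Finset.sum_subset (Finset.range_subset_range.mpr (by omega) :
            Finset.range (r+1) ⊆ Finset.range (n+1))]
        · apply Finset.sum_congr rfl
          intro j hj
          rw [Finset.mem_range] at hj
          rw [if_pos (by omega), show D - a - j = r - j by omega]
        · intro j hj hnj
          rw [Finset.mem_range] at hj hnj
          rw [if_neg (by omega)]
      rw [hLHS2]
      -- termwise comparison
      have hrefl := Finset.sum_range_reflect
        (fun i => (-1:Rβ)^i * ((p.choose i : ℕ) : Rβ)) (r+1)
      simp only [Nat.add_sub_cancel] at hrefl
      calc ∑ j ∈ Finset.range (r+1), β^(r-j) * ((-β)^j * ((p.choose j : ℕ) : Rβ))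
          = ∑ j ∈ Finset.range (r+1), β^r * ((-1:Rβ)^j * ((p.choose j : ℕ) : Rβ)) := by
            apply Finset.sum_congr rfl
            intro j hj
            rw [Finset.mem_range] at hj
            rw [neg_pow]
            rw [show β^(r-j) * ((-1:Rβ)^j * β^j * ((p.choose j : ℕ) : Rβ))
              = (β^(r-j) * β^j) * ((-1:Rβ)^j * ((p.choose j : ℕ) : Rβ)) by ring,
              ← pow_add, show r - j + j = r by omega]
        _ = β^r * ∑ j ∈ Finset.range (r+1), (-1:Rβ)^j * ((p.choose j : ℕ) : Rβ) := by
            rw [Finset.mul_sum]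
        _ = β^r * ∑ i ∈ Finset.range (r+1), (-1:Rβ)^(r-i) * ((p.choose (r-i) : ℕ) : Rβ) := by
            rw [hrefl]
        _ = (-β)^r * ∑ i ∈ Finset.range (r+1), (-1:Rβ)^i * ((p.choose (r-i) : ℕ) : Rβ) := by
            rw [neg_pow, Finset.mul_sum, Finset.mul_sum]
            apply Finset.sum_congr rfl
            intro i hi
            rw [Finset.mem_range] at hi
            rw [neg_pow_split i r (by omega)]
            have hsq : ((-1:Rβ))^(r*2) = 1 := by
              rw [mul_comm, pow_mul]
              norm_num
            ring_nf
            rw [hsq, mul_one]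
    · -- r ≥ n : RHS = 0, LHS = β^r * (alternating sum) = 0
      have hRHS0 : (∑ k ∈ Finset.range n, if D = a + k then (-β)^k *
          ∑ i ∈ Finset.range (k+1), (-1:Rβ)^i * ((p.choose (k-i) : ℕ) : Rβ) else 0) = 0 := by
        apply Finset.sum_eq_zero
        intro k hk
        rw [Finset.mem_range] at hk
        rw [if_neg (by omega)]
      rw [hRHS0]
      calc (∑ j ∈ Finset.range (n+1), if a + j ≤ D
          then β^(D-a-j) * ((-β)^j * ((p.choose j : ℕ) : Rβ)) else 0)
          = ∑ j ∈ Finset.range (n+1), β^r * ((-1:Rβ)^j * ((p.choose j : ℕ) : Rβ)) := by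
            apply Finset.sum_congr rfl
            intro j hj
            rw [Finset.mem_range] at hj
            rw [if_pos (by omega), neg_pow]
            rw [show β^(D-a-j) * ((-1:Rβ)^j * β^j * ((p.choose j : ℕ) : Rβ))
              = (β^(D-a-j) * β^j) * ((-1:Rβ)^j * ((p.choose j : ℕ) : Rβ)) by ring,
              ← pow_add, show D - a - j + j = r by omega]
        _ = β^r * ∑ j ∈ Finset.range (n+1), (-1:Rβ)^j * ((p.choose j : ℕ) : Rβ) := by
            rw [Finset.mul_sum]
        _ = 0 := by rw [alt_choose_sum p n hp1 (by omega), mul_zero]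
  · -- D < a : both sides zero
    rw [Finset.sum_eq_zero, Finset.sum_eq_zero]
    · intro k _
      rw [if_neg (by omega)]
    · intro j _
      rw [if_neg (by omega)]
end
end
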